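/- arXiv:1509.06272 — 5 statements merged into one kernel-verified Lean document; each statement's English description precedes it below -/
import Mathlib

section
/- For any integers k, m, n, c with k ≥ 2, m ≥ 2, n ≥ 2 and gcd(m, n) = 1, one has φ_k(mn, c) = φ_k(m, c) · φ_k(n, c); that is, φ_k(n,c) is multiplicative with respect to n. -/
/-- `phi k n c` is the number of `k`-tuples of exceptional units of `ℤ/nℤ`
(i.e. elements `u` with both `u` and `1 - u` units) summing to `c` modulo `n`. -/
noncomputable def phi (k n : ℕ) (c : ℤ) : ℕ :=
  Nat.card {x : Fin k → ZMod n //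
    (∀ i, IsUnit (x i) ∧ IsUnit (1 - x i)) ∧ ∑ i, x i = (c : ZMod n)}

lemma isUnit_prod_iff {M N : Type*} [Monoid M] [Monoid N] {p : M × N} :
    IsUnit p ↔ IsUnit p.1 ∧ IsUnit p.2 := by
  constructor
  · intro h
    exact ⟨h.map (MonoidHom.fst M N), h.map (MonoidHom.snd M N)⟩
  · rintro ⟨⟨u, hu⟩, ⟨v, hv⟩⟩
    refine ⟨⟨(u, v), ((u⁻¹ : Mˣ), (v⁻¹ : Nˣ)), ?_, ?_⟩, ?_⟩
    · ext <;> simp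
    · ext <;> simp
    · simp [Prod.ext_iff, ← hu, ← hv]

theorem phi_multiplicative (k m n : ℕ) (c : ℤ) (hk : 2 ≤ k) (hm : 2 ≤ m)
    (hn : 2 ≤ n) (hmn : Nat.Coprime m n) :
    phi k (m * n) c = phi k m c * phi k n c := by
  classical
  have : NeZero (m * n) := ⟨by positivity⟩
  let e : ZMod (m * n) ≃+* ZMod m × ZMod n := ZMod.chineseRemainder hmn
  have hunit : ∀ a : ZMod (m * n), IsUnit a ↔ IsUnit (e a).1 ∧ IsUnit (e a).2 := by
    intro a
    rw [← isUnit_prod_iff]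
    constructor
    · intro h; exact h.map e
    · intro h
      have := h.map e.symm
      simpa using this
  let F : (Fin k → ZMod (m * n)) ≃ ((Fin k → ZMod m) × (Fin k → ZMod n)) :=
    (Equiv.arrowCongr (Equiv.refl (Fin k)) e.toEquiv).trans
      (Equiv.arrowProdEquivProdArrow _ _ _)
  have hF1 : ∀ (x : Fin k → ZMod (m * n)) i, (F x).1 i = (e (x i)).1 := fun _ _ => rfl
  have hF2 : ∀ (x : Fin k → ZMod (m * n)) i, (F x).2 i = (e (x i)).2 := fun _ _ => rfl
  have key : ∀ x : Fin k → ZMod (m * n),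
      ((∀ i, IsUnit (x i) ∧ IsUnit (1 - x i)) ∧ ∑ i, x i = (c : ZMod (m * n))) ↔
      (((∀ i, IsUnit ((F x).1 i) ∧ IsUnit (1 - (F x).1 i)) ∧ ∑ i, (F x).1 i = (c : ZMod m)) ∧
       ((∀ i, IsUnit ((F x).2 i) ∧ IsUnit (1 - (F x).2 i)) ∧ ∑ i, (F x).2 i = (c : ZMod n))) := by
    intro x
    have hsub : ∀ a : ZMod (m * n), e (1 - a) = (1 - (e a).1, 1 - (e a).2) := by
      intro a; rw [map_sub, map_one]; rfl
    have hsum1 : ∑ i, (F x).1 i = (e (∑ i, x i)).1 := by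
      simp only [hF1]
      rw [← Prod.fst_sum, ← map_sum]
    have hsum2 : ∑ i, (F x).2 i = (e (∑ i, x i)).2 := by
      simp only [hF2]
      rw [← Prod.snd_sum, ← map_sum]
    have hc : e (c : ZMod (m * n)) = ((c : ZMod m), (c : ZMod n)) := by
      have := map_intCast (e : ZMod (m * n) →+* ZMod m × ZMod n) c
      simpa [Prod.ext_iff] using this
    constructor
    · rintro ⟨h1, h2⟩
      refine ⟨⟨fun i => ?_, ?_⟩, ⟨fun i => ?_, ?_⟩⟩
      · obtain ⟨hu, hv⟩ := h1 i
        rw [hunit] at hu hv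
        rw [hsub] at hv
        exact ⟨hu.1, hv.1⟩
      · rw [hsum1, h2, hc]
      · obtain ⟨hu, hv⟩ := h1 i
        rw [hunit] at hu hv
        rw [hsub] at hv
        exact ⟨hu.2, hv.2⟩
      · rw [hsum2, h2, hc]
    · rintro ⟨⟨h1, h2⟩, ⟨h3, h4⟩⟩
      constructor
      · intro i
        constructor
        · rw [hunit]; exact ⟨(h1 i).1, (h3 i).1⟩
        · rw [hunit, hsub]; exact ⟨(h1 i).2, (h3 i).2⟩
      · have : e (∑ i, x i) = e (c : ZMod (m * n)) := by
          rw [hc, Prod.ext_iff, ← hsum1, ← hsum2]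
          exact ⟨h2, h4⟩
        exact e.injective this
  have equiv1 := (Equiv.subtypeEquiv F key).trans (Equiv.subtypeProdEquivProd
    (p := fun y : Fin k → ZMod m =>
      (∀ i, IsUnit (y i) ∧ IsUnit (1 - y i)) ∧ ∑ i, y i = (c : ZMod m))
    (q := fun z : Fin k → ZMod n =>
      (∀ i, IsUnit (z i) ∧ IsUnit (1 - z i)) ∧ ∑ i, z i = (c : ZMod n)))
  unfold phi
  rw [Nat.card_congr equiv1, Nat.card_prod]
end

section
/- For any prime p, any integers k ≥ 2 and α ≥ 1, and any integer c, one has φ_k(p^α, c) = p^{(k-1)(α-1)} · φ_k(p, c). -/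
theorem card_aux {R S : Type*} [CommRing R] [CommRing S]
    (f : R →+* S) (s : S → R) (hfs : ∀ y, f (s y) = y)
    (hu : ∀ a : R, IsUnit a ↔ IsUnit (f a)) (m : ℕ) (C : R) :
    Nat.card {x : Fin (m+1) → R // (∀ i, IsUnit (x i) ∧ IsUnit (1 - x i)) ∧ ∑ i, x i = C}
      = Nat.card {y : Fin (m+1) → S // (∀ i, IsUnit (y i) ∧ IsUnit (1 - y i)) ∧ ∑ i, y i = f C}
        * Nat.card {z : R // f z = 0} ^ m := by
  classical
  -- the lifting map
  set L : (Fin (m+1) → S) → (Fin m → {z : R // f z = 0}) → (Fin (m+1) → R) :=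
    fun y t => Fin.snoc (fun i : Fin m => s (y i.castSucc) + (t i : R))
      (C - ∑ i : Fin m, (s (y i.castSucc) + (t i : R))) with hL
  have key : ∀ (y : Fin (m+1) → S) (t : Fin m → {z : R // f z = 0}),
      (∑ i, y i = f C) → ∀ j, f (L y t j) = y j := by
    intro y t hy j
    refine Fin.lastCases ?_ ?_ j
    · simp only [hL, Fin.snoc_last, map_sub, map_sum, map_add, hfs, (t _).2, add_zero]
      rw [← hy, Fin.sum_univ_castSucc]
      ring
    · intro i
      simp only [hL, Fin.snoc_castSucc, map_add, hfs, (t i).2, add_zero]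
  have e : {x : Fin (m+1) → R // (∀ i, IsUnit (x i) ∧ IsUnit (1 - x i)) ∧ ∑ i, x i = C}
      ≃ {y : Fin (m+1) → S // (∀ i, IsUnit (y i) ∧ IsUnit (1 - y i)) ∧ ∑ i, y i = f C}
        × (Fin m → {z : R // f z = 0}) := by
    refine
      { toFun := fun x => ⟨⟨fun i => f (x.1 i), ?_⟩,
          fun i => ⟨x.1 i.castSucc - s (f (x.1 i.castSucc)), by rw [map_sub, hfs, sub_self]⟩⟩,
        invFun := fun yt => ⟨L yt.1.1 yt.2, ?_⟩,
        left_inv := ?_, right_inv := ?_ }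
    · obtain ⟨hx1, hx2⟩ := x.2
      refine ⟨fun i => ⟨(hu _).mp (hx1 i).1, ?_⟩, ?_⟩
      · have h := (hu _).mp (hx1 i).2
        rwa [map_sub, map_one] at h
      · rw [← map_sum, hx2]
    · have hk := key yt.1.1 yt.2 yt.1.2.2
      refine ⟨fun j => ⟨?_, ?_⟩, ?_⟩
      · rw [hu, hk j]; exact (yt.1.2.1 j).1
      · rw [hu, map_sub, map_one, hk j]; exact (yt.1.2.1 j).2
      · rw [Fin.sum_univ_castSucc]
        simp only [hL, Fin.snoc_castSucc, Fin.snoc_last]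
        ring
    · rintro ⟨x, hx1, hx2⟩
      ext j
      refine Fin.lastCases ?_ ?_ j
      · simp only [hL, Fin.snoc_last]
        have : ∀ i : Fin m, s (f (x i.castSucc)) + (x i.castSucc - s (f (x i.castSucc)))
            = x i.castSucc := fun i => by ring
        rw [Finset.sum_congr rfl fun i _ => this i, ← hx2, Fin.sum_univ_castSucc]
        ring
      · intro i
        simp only [hL, Fin.snoc_castSucc]
        ring
    · rintro ⟨⟨y, hy⟩, t⟩
      have hk := key y t hy.2
      refine Prod.ext (Subtype.ext (funext fun j => hk j)) (funext fun i => Subtype.ext ?_)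
      simp only [hL, Fin.snoc_castSucc]
      rw [map_add, hfs, (t i).2, add_zero]
      ring
  rw [Nat.card_congr e, Nat.card_prod, Nat.card_fun]
  simp

theorem phi_prime_pow (p : ℕ) (hp : p.Prime) (k α : ℕ) (hk : 2 ≤ k)
    (hα : 1 ≤ α) (c : ℤ) :
    phi k (p ^ α) c = p ^ ((k - 1) * (α - 1)) * phi k p c := by
  obtain ⟨m, rfl⟩ : ∃ m, k = m + 1 := ⟨k - 1, by omega⟩
  obtain ⟨β, rfl⟩ : ∃ β, α = β + 1 := ⟨α - 1, by omega⟩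
  haveI : Fact p.Prime := ⟨hp⟩
  haveI : NeZero (p ^ (β + 1)) := ⟨pow_ne_zero _ hp.pos.ne'⟩
  set f : ZMod (p ^ (β + 1)) →+* ZMod p :=
    ZMod.castHom (dvd_pow_self p β.succ_ne_zero) (ZMod p) with hf
  have hfs : ∀ y : ZMod p, f ((y.val : ℕ) : ZMod (p ^ (β + 1))) = y := by
    intro y
    rw [map_natCast, ZMod.natCast_val, ZMod.cast_id]
  have hu : ∀ a : ZMod (p ^ (β + 1)), IsUnit a ↔ IsUnit (f a) := by
    intro a
    obtain ⟨t, rfl⟩ : ∃ t : ℕ, (t : ZMod (p ^ (β + 1))) = a :=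
      ⟨a.val, by rw [ZMod.natCast_val, ZMod.cast_id]⟩
    rw [map_natCast, ZMod.isUnit_iff_coprime, ZMod.isUnit_iff_coprime,
      Nat.coprime_pow_right_iff β.succ_pos]
  have hsurj : Function.Surjective f := fun y => ⟨((y.val : ℕ) : _), hfs y⟩
  have hK : Nat.card {z : ZMod (p ^ (β + 1)) // f z = 0} = p ^ β := by
    have key := AddSubgroup.card_eq_card_quotient_mul_card_addSubgroup f.toAddMonoidHom.ker
    have e1 : Nat.card (ZMod (p ^ (β + 1)) ⧸ f.toAddMonoidHom.ker) = p := by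
      rw [Nat.card_congr
        (QuotientAddGroup.quotientKerEquivOfSurjective f.toAddMonoidHom hsurj).toEquiv,
        Nat.card_zmod]
    have e2 : Nat.card {z : ZMod (p ^ (β + 1)) // f z = 0}
        = Nat.card f.toAddMonoidHom.ker :=
      Nat.card_congr (Equiv.subtypeEquivRight fun z => Iff.symm (AddMonoidHom.mem_ker (f := f.toAddMonoidHom)))
    rw [Nat.card_zmod, e1] at key
    rw [e2]
    exact Nat.eq_of_mul_eq_mul_left hp.pos (key.symm.trans (pow_succ' p β))
  have main := card_aux f (fun y => ((y.val : ℕ) : ZMod (p ^ (β + 1)))) hfs hu m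
    ((c : ZMod (p ^ (β + 1))))
  rw [map_intCast] at main
  unfold phi
  rw [main, hK, ← pow_mul]
  simp [Nat.mul_comm]
end

section
/- For any prime p, any integer k ≥ 2, and any integer c, one has p · φ_k(p, c) = (-1)^k · ( p · Σ_{0 ≤ j ≤ k, j ≡ c (mod p)} C(k,j) + (2-p)^k - 2^k ). -/
open Finset

section TupleSum

variable {G : Type*} [AddCommGroup G] [DecidableEq G] (S : Finset G)

def tupleSumCount (k : ℕ) (d : G) : ℕ :=
  #{x ∈ Fintype.piFinset fun _ : Fin k ↦ S | ∑ i, x i = d}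

lemma tupleSumCount_zero (d : G) : tupleSumCount S 0 d = if d = 0 then 1 else 0 := by
  split_ifs with hd <;> simp [tupleSumCount, hd, eq_comm]

lemma tupleSumCount_succ (k : ℕ) (d : G) :
    tupleSumCount S (k + 1) d = ∑ s ∈ S, tupleSumCount S k (d - s) := by
  simp only [tupleSumCount]
  rw [← card_sigma]
  refine card_nbij' (fun x ↦ ⟨x 0, Fin.tail x⟩) (fun y ↦ Fin.cons y.1 y.2) ?_ ?_
    (fun x _ ↦ Fin.cons_self_tail x) (fun y _ ↦ by simp)
  · intro x
    simp +contextual [Fin.forall_fin_succ, Fin.sum_univ_succ, eq_sub_iff_add_eq', Fin.tail]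
  · intro y
    simp +contextual [Fin.forall_fin_succ, Fin.sum_univ_succ, eq_sub_iff_add_eq']

lemma sum_tupleSumCount [Fintype G] (k : ℕ) : ∑ d, tupleSumCount S k d = #S ^ k := by
  rw [← Fintype.card_piFinset_const, card_eq_sum_card_fiberwise fun x _ ↦ mem_univ (∑ i, x i)]
  rfl

end TupleSum

section ResidueBinomSum

variable {R : Type*} [AddGroupWithOne R] [DecidableEq R]

def residueBinomSum (k : ℕ) (d : R) : ℕ :=
  ∑ j ∈ range (k + 1) with ((j : ℕ) : R) = d, k.choose j

lemma residueBinomSum_zero (d : R) : residueBinomSum 0 d = if d = 0 then 1 else 0 := by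
  split_ifs with hd <;> simp [residueBinomSum, sum_filter, hd, eq_comm]

lemma residueBinomSum_succ (k : ℕ) (d : R) :
    residueBinomSum (k + 1) d = residueBinomSum k d + residueBinomSum k (d - 1) := by
  let g (n j : ℕ) : ℕ := if (j : R) = d then n.choose j else 0
  have hpascal (j : ℕ) :
      g (k + 1) (j + 1) = g k (j + 1) + if (j : R) = d - 1 then k.choose j else 0 := by
    have hshift : (j : R) + 1 = d ↔ (j : R) = d - 1 := eq_sub_iff_add_eq.symm
    by_cases h : (j : R) = d - 1 <;> simp [g, hshift, h, Nat.choose_succ_succ', add_comm]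
  have hreindex : ∑ j ∈ range (k + 1), g k j = ∑ j ∈ range (k + 1), g k (j + 1) + g k 0 := by
    rw [← sum_range_succ', sum_range_succ _ (k + 1)]
    simp [g, Nat.choose_succ_self]
  simp only [residueBinomSum, sum_filter]
  change ∑ j ∈ range (k + 2), g (k + 1) j = ∑ j ∈ range (k + 1), g k j + _
  rw [sum_range_succ', sum_congr rfl fun j _ ↦ hpascal j, sum_add_distrib, hreindex]
  simp only [g, Nat.choose_zero_right]
  ring

lemma residueBinomSum_intCast (n k : ℕ) (c : ℤ) :
    (residueBinomSum k (c : ZMod n) : ℤ) =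
      ∑ j ∈ range (k + 1) with ((j : ℕ) : ℤ) % n = c % n, (k.choose j : ℤ) := by
  rw [residueBinomSum, Nat.cast_sum]
  refine sum_congr (filter_congr fun j _ ↦ ?_) fun _ _ ↦ rfl
  rw [← ZMod.intCast_eq_intCast_iff', Int.cast_natCast]

end ResidueBinomSum

section SdiffZeroOne

variable {R : Type*} [AddCommGroupWithOne R] [Fintype R] [DecidableEq R] [NeZero (1 : R)]

lemma tupleSumCount_sdiff_zero_one_succ (k : ℕ) (d : R) :
    (tupleSumCount (univ \ {0, 1} : Finset R) (k + 1) d : ℤ) =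
      ((Fintype.card R : ℤ) - 2) ^ k - tupleSumCount (univ \ {0, 1}) k d -
        tupleSumCount (univ \ {0, 1}) k (d - 1) := by
  have hpair : #({0, 1} : Finset R) = 2 := card_pair zero_ne_one
  have hcard : ((#(univ \ {0, 1} : Finset R) : ℕ) : ℤ) = Fintype.card R - 2 := by
    rw [card_sdiff_of_subset (subset_univ _), card_univ, hpair,
      Nat.cast_sub (hpair ▸ card_le_univ _), Nat.cast_ofNat]
  have htotal : ∑ s, (tupleSumCount (univ \ {0, 1}) k (d - s) : ℤ) =
      ((Fintype.card R : ℤ) - 2) ^ k := by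
    rw [← Nat.cast_sum, ← hcard, ← Nat.cast_pow, ← sum_tupleSumCount]
    exact congrArg _ ((Equiv.subLeft d).sum_comp _)
  rw [tupleSumCount_succ, Nat.cast_sum, sum_sdiff_eq_sub (subset_univ _), htotal,
    sum_pair zero_ne_one, sub_zero]
  ring

theorem card_mul_tupleSumCount_sdiff_zero_one (k : ℕ) (d : R) :
    (Fintype.card R : ℤ) * tupleSumCount (univ \ {0, 1} : Finset R) k d =
      (-1) ^ k * ((Fintype.card R : ℤ) * residueBinomSum k d +
        (2 - (Fintype.card R : ℤ)) ^ k - 2 ^ k) := by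
  induction k generalizing d with
  | zero =>
    rw [tupleSumCount_zero, residueBinomSum_zero]
    split_ifs <;> simp
  | succ k ih =>
    have hpow : ((Fintype.card R : ℤ) - 2) ^ k = (-1) ^ k * (2 - (Fintype.card R : ℤ)) ^ k := by
      rw [← mul_pow]
      ring
    rw [tupleSumCount_sdiff_zero_one_succ, residueBinomSum_succ]
    push_cast
    linear_combination -ih d - ih (d - 1) + (Fintype.card R : ℤ) * hpow

end SdiffZeroOne

lemma isUnit_and_isUnit_one_sub_iff {K : Type*} [DivisionRing K] (u : K) :
    IsUnit u ∧ IsUnit (1 - u) ↔ u ≠ 0 ∧ u ≠ 1 := by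
  rw [isUnit_iff_ne_zero, isUnit_iff_ne_zero, sub_ne_zero, ne_comm (a := 1)]

lemma phi_eq_tupleSumCount (p : ℕ) [Fact p.Prime] (k : ℕ) (c : ℤ) :
    phi k p c = tupleSumCount (univ \ {0, 1} : Finset (ZMod p)) k c := by
  rw [phi, Nat.card_eq_fintype_card, Fintype.card_subtype, tupleSumCount]
  congr 1
  ext x
  simp only [mem_filter, mem_univ, true_and, Fintype.mem_piFinset, mem_sdiff, mem_insert,
    mem_singleton, not_or, isUnit_and_isUnit_one_sub_iff]

theorem phi_prime_general (p : ℕ) (hp : p.Prime) (k : ℕ) (c : ℤ) :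
    (p : ℤ) * (phi k p c : ℤ) =
      (-1) ^ k * ((p : ℤ) * (∑ j ∈ (Finset.range (k + 1)).filter
            (fun j : ℕ => (j : ℤ) % (p : ℤ) = c % (p : ℤ)), (k.choose j : ℤ))
          + (2 - (p : ℤ)) ^ k - 2 ^ k) := by
  have : Fact p.Prime := ⟨hp⟩
  have h := card_mul_tupleSumCount_sdiff_zero_one (R := ZMod p) k c
  rw [ZMod.card] at h
  rw [phi_eq_tupleSumCount, h, residueBinomSum_intCast]

theorem phi_prime (p : ℕ) (hp : p.Prime) (k : ℕ) (hk : 2 ≤ k) (c : ℤ) :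
    (p : ℤ) * (phi k p c : ℤ) =
      (-1) ^ k * ((p : ℤ) * (∑ j ∈ (Finset.range (k + 1)).filter
            (fun j : ℕ => (j : ℤ) % (p : ℤ) = c % (p : ℤ)), (k.choose j : ℤ))
          + (2 - (p : ℤ)) ^ k - 2 ^ k) :=
  phi_prime_general p hp k c
end

section
/- For any prime p ≥ 5, any integer k ≥ 1, and any integer c, the number φ_2(p^k, c) of pairs of exceptional units of ℤ_{p^k} summing to c modulo p^k equals p^{k-1}(p-2) if c ≡ 1 (mod p); equals p^{k-1}(p-3) if c ≡ 0 (mod p) or c ≡ 2 (mod p); and equals p^{k-1}(p-4) otherwise. -/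
/-!
A pair of exceptional units of `ℤ/p^k` with sum `c` is determined by its first entry `x`, and
`x`, `c - x` are both exceptional iff the reduction of `x` mod `p` avoids `{0, 1, c, c - 1}`,
because an element of `ℤ/p^k` is a unit iff its reduction is nonzero. All fibres of the reduction
map have `p^(k-1)` elements, and for odd `p` the excluded set has 2, 3 or 4 elements according
as `c ≡ 1`, `c ≡ 0, 2`, or otherwise.
-/

open Finset

lemma AddMonoidHom.card_preimage_mul_card {G H : Type*} [AddGroup G] [Fintype G] [AddGroup H]
    [Fintype H] [DecidableEq H] (f : G →+ H) (hf : Function.Surjective f) (B : Finset H) :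
    #{g | f g ∈ B} * Fintype.card H = Fintype.card G * #B := by
  set m := #{g | f g = 0}
  have hfiber (b : H) : #{g | f g = b} = m :=
    AddMonoidHom.card_fiber_eq_of_mem_range f (hf b) (hf 0)
  have hpre : #{g | f g ∈ B} = #B * m := by
    rw [card_eq_sum_card_fiberwise (f := f) (t := B) fun g hg => by simpa using hg,
      ← smul_eq_mul, ← sum_const]
    refine sum_congr rfl fun b hb => ?_
    rw [← hfiber b, filter_filter]
    congr 1
    ext g
    simp only [mem_filter, mem_univ, true_and, and_iff_right_iff_imp]
    exact fun h => h ▸ hb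
  have huniv : Fintype.card G = Fintype.card H * m := by
    rw [← card_univ, card_eq_sum_card_fiberwise (t := univ) fun g _ => mem_univ (f g)]
    simp [hfiber]
  rw [hpre, huniv]
  ring

def IsExceptionalUnit {R : Type*} [CommRing R] (u : R) : Prop :=
  IsUnit u ∧ IsUnit (1 - u)

lemma phi_two_eq_card (n : ℕ) (c : ℤ) :
    phi 2 n c =
      Nat.card {y : ZMod n // IsExceptionalUnit y ∧ IsExceptionalUnit (c - y : ZMod n)} := by
  refine Nat.card_congr
    { toFun := fun x => ⟨x.1 0, x.2.1 0, ?_⟩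
      invFun := fun y => ⟨![y.1, c - y.1], ?_, ?_⟩
      left_inv := ?_
      right_inv := fun y => rfl }
  · obtain ⟨x, hx, hsum⟩ := x
    rw [Fin.sum_univ_two] at hsum
    simpa [← hsum, IsExceptionalUnit] using hx 1
  · intro i
    fin_cases i
    exacts [y.2.1, y.2.2]
  · simp
  · rintro ⟨x, hx, hsum⟩
    rw [Fin.sum_univ_two] at hsum
    ext i
    fin_cases i
    · rfl
    · simp [← hsum]

namespace ZMod

lemma card_castHom_preimage {m n : ℕ} [NeZero m] [NeZero n] (h : m ∣ n) (B : Finset (ZMod m)) :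
    #{x : ZMod n | castHom h (ZMod m) x ∈ B} = n / m * #B := by
  have := (castHom h (ZMod m)).toAddMonoidHom.card_preimage_mul_card (castHom_surjective h) B
  rw [card, card] at this
  rw [Nat.div_mul_right_comm h, Nat.div_eq_of_eq_mul_left (NeZero.pos m) this.symm]
  rfl

lemma isUnit_iff_castHom_ne_zero {p k : ℕ} (hp : p.Prime) (hk : k ≠ 0) (x : ZMod (p ^ k)) :
    IsUnit x ↔ castHom (dvd_pow_self p hk) (ZMod p) x ≠ 0 := by
  have : NeZero (p ^ k) := ⟨pow_ne_zero k hp.ne_zero⟩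
  rw [← natCast_zmod_val x, isUnit_natCast_iff_not_dvd_pow hp (Nat.pos_of_ne_zero hk),
    map_natCast, Ne, natCast_eq_zero_iff]

lemma intCast_eq_natCast_iff_emod {p : ℕ} [NeZero p] (c : ℤ) {m : ℕ} (hm : m < p) :
    (c : ZMod p) = m ↔ c % p = m := by
  rw [← Int.cast_natCast, intCast_eq_intCast_iff',
    Int.emod_eq_of_lt (a := m) (by positivity) (by omega)]

end ZMod

lemma isExceptionalUnit_and_sub_iff {p k : ℕ} (hp : p.Prime) (hk : k ≠ 0) (c y : ZMod (p ^ k)) :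
    IsExceptionalUnit y ∧ IsExceptionalUnit (c - y) ↔
      ZMod.castHom (dvd_pow_self p hk) (ZMod p) y ∉
        ({0, 1, ZMod.castHom (dvd_pow_self p hk) (ZMod p) c,
          ZMod.castHom (dvd_pow_self p hk) (ZMod p) c - 1} : Finset (ZMod p)) := by
  simp only [IsExceptionalUnit, ZMod.isUnit_iff_castHom_ne_zero hp hk, map_sub, map_one,
    mem_insert, mem_singleton, not_or, sub_ne_zero]
  grind

lemma card_zero_one_self_sub_one {R : Type*} [Ring R] [DecidableEq R] [Nontrivial R]
    [NeZero (2 : R)] (c : R) :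
    #({0, 1, c, c - 1} : Finset R) = if c = 1 then 2 else if c = 0 ∨ c = 2 then 3 else 4 := by
  have h1_ne_neg_one : (1 : R) ≠ -1 := fun h =>
    NeZero.ne (2 : R) (by rw [← one_add_one_eq_two, add_eq_zero_iff_eq_neg]; exact h)
  have h1_ne_2 : (1 : R) ≠ 2 := by rw [← one_add_one_eq_two]; simp
  by_cases hc1 : c = 1
  · simp [hc1]
  by_cases hc0 : c = 0
  · simp [hc0, h1_ne_neg_one]
  by_cases hc2 : c = 2
  · have h2_sub_one : (2 : R) - 1 = 1 := by rw [← one_add_one_eq_two, add_sub_cancel_right]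
    simp [hc2, h2_sub_one, h1_ne_2, h1_ne_2.symm, (NeZero.ne (2 : R)).symm]
  have hc_sub_one_ne_one : c - 1 ≠ 1 := by
    rwa [Ne, sub_eq_iff_eq_add, one_add_one_eq_two]
  rw [card_insert_of_notMem, card_insert_of_notMem, card_pair]
  · simp [hc0, hc1, hc2]
  · simpa using fun h => one_ne_zero (sub_eq_self.mp h.symm)
  · simp [Ne.symm hc1, hc_sub_one_ne_one.symm]
  · simpa [Ne.symm hc0] using fun h => hc1 (sub_eq_zero.mp h.symm)

lemma phi_two_prime_pow_eq_mul_card {p k : ℕ} (hp : p.Prime) (hk : 1 ≤ k) (c : ℤ) :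
    phi 2 (p ^ k) c =
      p ^ (k - 1) * (p - #({0, 1, (c : ZMod p), (c : ZMod p) - 1} : Finset (ZMod p))) := by
  have : NeZero p := ⟨hp.ne_zero⟩
  have : NeZero (p ^ k) := ⟨pow_ne_zero k hp.ne_zero⟩
  have hk0 : k ≠ 0 := by omega
  have hpk : p ^ k / p = p ^ (k - 1) :=
    Nat.div_eq_of_eq_mul_left hp.pos (by rw [← pow_succ, Nat.sub_add_cancel hk])
  rw [phi_two_eq_card, Nat.card_congr (Equiv.subtypeEquivRight fun y =>
    isExceptionalUnit_and_sub_iff hp hk0 _ y), Nat.card_eq_fintype_card, Fintype.card_subtype]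
  simp only [map_intCast, ← mem_compl]
  rw [ZMod.card_castHom_preimage, card_compl, ZMod.card, hpk]

theorem phi_two_prime_pow (p : ℕ) (hp : p.Prime) (hp5 : 5 ≤ p) (k : ℕ)
    (hk : 1 ≤ k) (c : ℤ) :
    phi 2 (p ^ k) c =
      if c % p = 1 then p ^ (k - 1) * (p - 2)
      else if c % p = 0 ∨ c % p = 2 then p ^ (k - 1) * (p - 3)
      else p ^ (k - 1) * (p - 4) := by
  have := Fact.mk hp
  have : NeZero (2 : ZMod p) := ⟨fun h => by
    have := Nat.le_of_dvd two_pos ((ZMod.natCast_eq_zero_iff 2 p).mp (by exact_mod_cast h))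
    omega⟩
  have h0 := ZMod.intCast_eq_natCast_iff_emod c (p := p) (m := 0) hp.pos
  have h1 := ZMod.intCast_eq_natCast_iff_emod c (p := p) (m := 1) hp.one_lt
  have h2 := ZMod.intCast_eq_natCast_iff_emod c (p := p) (m := 2) (by omega)
  simp only [Nat.cast_zero, Nat.cast_one, Nat.cast_ofNat] at h0 h1 h2
  rw [phi_two_prime_pow_eq_mul_card hp hk, card_zero_one_self_sub_one]
  simp only [h0, h1, h2]
  split_ifs <;> rfl
end

section
/- For any integer n ≥ 2, the number of exceptional units of ℤ_n multiplied by ∏_{p ∣ n} p equals n · ∏_{p ∣ n} (p - 2), where both products run over the distinct primes dividing n (equivalently, #ℤ_n^{∗∗} = n · ∏_{p ∣ n} (1 - 2/p)). -/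
/-!
By the Chinese remainder theorem the number of exceptional units is multiplicative in `n`.
Modulo `p ^ k`, being a unit is decided by the residue modulo `p`, i.e. reduction to `ZMod p`
is a local homomorphism onto a field. So the exceptional units are the preimage of
`ZMod p \ {0, 1}`, and as all fibres of the reduction have `p ^ (k - 1)` elements there are
`p ^ (k - 1) * (p - 2)` of them. For `n = 0` both sides vanish: `1 - 1 = 0` and `1 - (-1) = 2`
are not units of `ℤ`.
-/

open Finset

abbrev ExceptionalUnits (R : Type*) [Ring R] : Type _ := {u : R // IsUnit u ∧ IsUnit (1 - u)}

namespace ExceptionalUnits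

variable {R S : Type*} [Ring R] [Ring S]

def congr (e : R ≃+* S) : ExceptionalUnits R ≃ ExceptionalUnits S :=
  e.toEquiv.subtypeEquiv fun u => by
    simp only [RingEquiv.toEquiv_eq_coe, EquivLike.coe_coe, ← map_one e, ← map_sub,
      isUnit_map_iff]

def prodEquiv : ExceptionalUnits (R × S) ≃ ExceptionalUnits R × ExceptionalUnits S :=
  (Equiv.subtypeEquivRight fun u => by
    simp only [Prod.isUnit_iff, Prod.fst_sub, Prod.snd_sub, Prod.fst_one, Prod.snd_one]
    tauto).trans Equiv.subtypeProdEquivProd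

instance isEmpty_int : IsEmpty (ExceptionalUnits ℤ) := by
  refine ⟨fun ⟨u, hu, hu'⟩ => ?_⟩
  rcases Int.isUnit_iff.mp hu with rfl | rfl <;> simp [Int.isUnit_iff] at hu'

end ExceptionalUnits

section FiberCount

variable {G H : Type*} [AddGroup G] [Fintype G] [AddGroup H] [Fintype H] [DecidableEq H]

theorem AddMonoidHom.card_filter_comp_of_surjective (f : G →+ H) (hf : Function.Surjective f)
    (P : H → Prop) [DecidablePred P] :
    #{g | P (f g)} = #{h | P h} * #{g | f g = 0} := by
  rw [card_eq_sum_card_fiberwise (f := f) (t := {h | P h}) fun g hg => by simpa using hg]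
  refine (sum_congr rfl fun h hh => ?_).trans (sum_const_nat fun _ _ => rfl)
  rw [← AddMonoidHom.card_fiber_eq_of_mem_range f (hf h) (hf 0)]
  congr 1
  ext g
  simp only [mem_filter, mem_univ, true_and, and_iff_right_iff_imp]
  rintro rfl
  simpa using hh

theorem AddMonoidHom.card_filter_comp_mul_card (f : G →+ H) (hf : Function.Surjective f)
    (P : H → Prop) [DecidablePred P] :
    #{g | P (f g)} * Fintype.card H = #{h | P h} * Fintype.card G := by
  have hG := f.card_filter_comp_of_surjective hf fun _ => True
  simp only [filter_true, card_univ] at hG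
  rw [f.card_filter_comp_of_surjective hf, hG]
  ring

end FiberCount

theorem card_exceptionalUnits_mul_card_of_isLocalHom {R K : Type*} [Ring R] [Fintype R] [Field K]
    [Fintype K] [DecidableEq K] (φ : R →+* K) [IsLocalHom φ] (hφ : Function.Surjective φ) :
    Nat.card (ExceptionalUnits R) * Fintype.card K = Fintype.card R * (Fintype.card K - 2) := by
  have hunit (u : R) : IsUnit u ↔ φ u ≠ 0 := by rw [← isUnit_map_iff φ, isUnit_iff_ne_zero]
  have hcard : Nat.card (ExceptionalUnits R) = #{u | φ u ≠ 0 ∧ φ u ≠ 1} := by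
    classical
    rw [Nat.card_eq_fintype_card, Fintype.card_subtype]
    simp only [hunit, map_sub, map_one, ne_eq, sub_eq_zero, eq_comm (a := (1 : K))]
  have hres : #{v : K | v ≠ 0 ∧ v ≠ 1} = Fintype.card K - 2 := by
    rw [← card_pair (zero_ne_one' K), ← card_univ, ← card_sdiff_of_subset (subset_univ _)]
    congr 1
    ext v
    simp
  rw [hcard, ← hres, mul_comm (Fintype.card R)]
  exact φ.toAddMonoidHom.card_filter_comp_mul_card hφ fun v => v ≠ 0 ∧ v ≠ 1

namespace ZMod

instance isLocalHom_castHom_pow (p : ℕ) [NeZero p] {k : ℕ} [NeZero k] :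
    IsLocalHom (castHom (dvd_pow_self p (NeZero.ne k)) (ZMod p)) := by
  refine ⟨fun u hu => ?_⟩
  rw [← natCast_zmod_val u, map_natCast, isUnit_iff_coprime] at hu
  rw [← natCast_zmod_val u, isUnit_iff_coprime]
  exact hu.pow_right k

theorem card_exceptionalUnits_prime_pow_mul {p : ℕ} [Fact p.Prime] {k : ℕ} (hk : k ≠ 0) :
    Nat.card (ExceptionalUnits (ZMod (p ^ k))) * p = p ^ k * (p - 2) := by
  have : NeZero k := ⟨hk⟩
  simpa only [card] using
    card_exceptionalUnits_mul_card_of_isLocalHom _ (castHom_surjective (dvd_pow_self p hk))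

theorem card_exceptionalUnits_mul {m n : ℕ} (h : m.Coprime n) :
    Nat.card (ExceptionalUnits (ZMod (m * n))) =
      Nat.card (ExceptionalUnits (ZMod m)) * Nat.card (ExceptionalUnits (ZMod n)) := by
  rw [← Nat.card_prod]
  exact Nat.card_congr ((ExceptionalUnits.congr (chineseRemainder h)).trans
    ExceptionalUnits.prodEquiv)

theorem card_exceptionalUnits_mul_prod_primeFactors (n : ℕ) :
    Nat.card (ExceptionalUnits (ZMod n)) * ∏ p ∈ n.primeFactors, p =
      n * ∏ p ∈ n.primeFactors, (p - 2) := by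
  induction n using Nat.recOnPosPrimePosCoprime with
  | prime_pow p k hp hk =>
    have : Fact p.Prime := ⟨hp⟩
    rw [Nat.primeFactors_prime_pow hk.ne' hp, prod_singleton, prod_singleton]
    exact card_exceptionalUnits_prime_pow_mul hk.ne'
  | zero =>
    simp only [Nat.primeFactors_zero, prod_empty, mul_one]
    exact Nat.card_of_isEmpty (α := ExceptionalUnits ℤ)
  | one =>
    simp only [Nat.primeFactors_one, prod_empty, mul_one, Nat.card_eq_one_iff_exists]
    exact ⟨⟨0, isUnit_of_subsingleton _, isUnit_of_subsingleton _⟩, fun _ => Subsingleton.elim _ _⟩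
  | coprime a b ha hb hab iha ihb =>
    rw [card_exceptionalUnits_mul hab, Nat.primeFactors_mul (by lia) (by lia),
      prod_union hab.disjoint_primeFactors, prod_union hab.disjoint_primeFactors,
      mul_mul_mul_comm, iha, ihb, mul_mul_mul_comm]

end ZMod

theorem card_exceptional_units_general (n : ℕ) :
    Nat.card {u : ZMod n // IsUnit u ∧ IsUnit (1 - u)} * ∏ p ∈ n.primeFactors, p =
      n * ∏ p ∈ n.primeFactors, (p - 2) :=
  ZMod.card_exceptionalUnits_mul_prod_primeFactors n

theorem card_exceptional_units (n : ℕ) (hn : 2 ≤ n) :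
    Nat.card {u : ZMod n // IsUnit u ∧ IsUnit (1 - u)} * ∏ p ∈ n.primeFactors, p =
      n * ∏ p ∈ n.primeFactors, (p - 2) :=
  card_exceptional_units_general n
end
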